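/- Let (V,m,σ) be a Yang–Baxter algebra with m∘σ = m and σ² = id on V⊗V. Then the quantum quasi-shuffle product is twisted commutative on each V^{⊗i}⊗V^{⊗j}: ⋈_{σ(j,i)} ∘ β_{ij} = ⋈_{σ(i,j)}, where β_{ij} = T_{χ_{ij}} is the induced braiding on T(V). -/

import Mathlib

/-!
Induction on `(i, j)` along the recursion (1). Write `β_{i+1,j+1}` as the cycle
`σ_{i+1} ⋯ σ_{i+j+1}` followed by `β_{i,j+1}` acting on the first `i+j+1` factors. Applied to
`⋈_{(j+1,i+1)}`, it carries the summand that splits off the last letter of the right word onto the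
summand of `⋈_{(i+1,j+1)}` that splits off the last letter of the left word, and vice versa; the
merged summands correspond to each other because `m ∘ σ = m`. The braid-word identity behind the
exchange is `β_{p,q+1} · σ_{q+1} ⋯ σ_{q+p} = β_{p,q}`, which only uses `σ² = id` and the
commutation of distant `σ_k`.
-/
open CategoryTheory MonoidalCategory TensorProduct
noncomputable section
universe u
variable {K : Type u} [Field K]

def Tpow (M : ModuleCat.{u} K) : ℕ → ModuleCat.{u} K
  | 0 => ModuleCat.of K K
  | n+1 => Tpow M n ⊗ M

def sigR {M : ModuleCat.{u} K} (σ : M ⊗ M ⟶ M ⊗ M) : (n k : ℕ) → (Tpow M n ⟶ Tpow M n)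
  | n+2, 0 => (α_ (Tpow M n) M M).hom ≫ (Tpow M n ◁ σ) ≫ (α_ (Tpow M n) M M).inv
  | n+1, k+1 => sigR σ n k ▷ M
  | _, _ => 𝟙 _

def sigAt {M : ModuleCat.{u} K} (σ : M ⊗ M ⟶ M ⊗ M) (n i : ℕ) : Tpow M n ⟶ Tpow M n :=
  sigR σ n (n - 1 - i)

def asc {M : ModuleCat.{u} K} (σ : M ⊗ M ⟶ M ⊗ M) (n : ℕ) : (b l : ℕ) → (Tpow M n ⟶ Tpow M n)
  | _, 0 => 𝟙 _
  | b, l+1 => sigAt σ n b ≫ asc σ n (b+1) l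

def blockT {M : ModuleCat.{u} K} (σ : M ⊗ M ⟶ M ⊗ M) : (i j n : ℕ) → (Tpow M n ⟶ Tpow M n)
  | 0, _, _ => 𝟙 _
  | i+1, j, n => asc σ n (i+1) j ≫ blockT σ i j n

/-- `T(V)` as the direct sum of the tensor powers. -/
def TT (M : ModuleCat.{u} K) : Type u := DirectSum ℕ fun n => ↥(Tpow M n)

instance (M : ModuleCat.{u} K) : AddCommGroup (TT M) := by unfold TT; infer_instance
instance (M : ModuleCat.{u} K) : Module K (TT M) := by unfold TT; infer_instance

def TTc (M : ModuleCat.{u} K) : ModuleCat.{u} K := ModuleCat.of K (TT M)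

/-- the inclusion of the `n`-th tensor power into `T(V)`. -/
def iotaT (M : ModuleCat.{u} K) (n : ℕ) : Tpow M n ⟶ TTc M :=
  ModuleCat.ofHom (DirectSum.lof K ℕ (fun k => ↥(Tpow M k)) n : ↥(Tpow M n) →ₗ[K] TT M)

/-- concatenation on the right by one tensor factor, `T(V) ⊗ V → T(V)`. -/
def concatR (M : ModuleCat.{u} K) : TTc M ⊗ M ⟶ TTc M :=
  ModuleCat.ofHom ((DirectSum.toModule K ℕ (TT M) fun n =>
      (DirectSum.lof K ℕ (fun k => ↥(Tpow M k)) (n+1) :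
        ↥(Tpow M n) ⊗[K] ↥M →ₗ[K] TT M)) ∘ₗ
    (TensorProduct.directSumLeft K K (fun n => ↥(Tpow M n)) ↥M).toLinearMap :
    ↥(TTc M ⊗ M) →ₗ[K] TT M)

/-- `σ ⊗ id` on `(M ⊗ M) ⊗ M`. -/
def w1 {M : ModuleCat.{u} K} (σ : M ⊗ M ⟶ M ⊗ M) : (M ⊗ M) ⊗ M ⟶ (M ⊗ M) ⊗ M := σ ▷ M

/-- `id ⊗ σ` on `(M ⊗ M) ⊗ M`. -/
def w2 {M : ModuleCat.{u} K} (σ : M ⊗ M ⟶ M ⊗ M) : (M ⊗ M) ⊗ M ⟶ (M ⊗ M) ⊗ M :=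
  (α_ M M M).hom ≫ (M ◁ σ) ≫ (α_ M M M).inv

/-- `m ⊗ id` on `(M ⊗ M) ⊗ M`. -/
def wm1 {M : ModuleCat.{u} K} (mm : M ⊗ M ⟶ M) : (M ⊗ M) ⊗ M ⟶ M ⊗ M := mm ▷ M

/-- `id ⊗ m` on `(M ⊗ M) ⊗ M`. -/
def wm2 {M : ModuleCat.{u} K} (mm : M ⊗ M ⟶ M) : (M ⊗ M) ⊗ M ⟶ M ⊗ M :=
  (α_ M M M).hom ≫ (M ◁ mm)

namespace QuasiShuffle

variable {M : ModuleCat.{u} K} (σ : M ⊗ M ⟶ M ⊗ M)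

def tpowCast (M : ModuleCat.{u} K) {a b : ℕ} (h : a = b) : Tpow M a ⟶ Tpow M b :=
  eqToHom (congrArg (Tpow M) h)

@[simp] lemma tpowCast_self {a : ℕ} (h : a = a) : tpowCast M h = 𝟙 _ := rfl

@[simp] lemma tpowCast_comp_tpowCast_assoc {a b c : ℕ} (h : a = b) (h' : b = c)
    {X : ModuleCat.{u} K} (f : Tpow M c ⟶ X) :
    tpowCast M h ≫ tpowCast M h' ≫ f = tpowCast M (h.trans h') ≫ f := by
  subst h h'; simp

lemma comp_tpowCast_assoc {a b : ℕ} (h : a = b) (f : ∀ n, Tpow M n ⟶ Tpow M n)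
    {X : ModuleCat.{u} K} (g : Tpow M b ⟶ X) :
    f a ≫ tpowCast M h ≫ g = tpowCast M h ≫ f b ≫ g := by
  subst h; simp

lemma tpowCast_comp_iotaT {a b : ℕ} (h : a = b) : tpowCast M h ≫ iotaT M b = iotaT M a := by
  subst h; simp

def tensorId {a b : ℕ} (f : Tpow M a ⟶ Tpow M b) : Tpow M (a + 1) ⟶ Tpow M (b + 1) := f ▷ M

@[simp] lemma tensorId_id (a : ℕ) : tensorId (𝟙 (Tpow M a)) = 𝟙 _ := id_whiskerRight _ _

lemma tensorId_comp {a b c : ℕ} (f : Tpow M a ⟶ Tpow M b) (g : Tpow M b ⟶ Tpow M c) :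
    tensorId (f ≫ g) = tensorId f ≫ tensorId g :=
  comp_whiskerRight _ _ _

lemma sigR_zero (n : ℕ) :
    sigR σ (n + 1 + 1) 0 = (α_ (Tpow M n) M M).hom ≫ (Tpow M n ◁ σ) ≫ (α_ (Tpow M n) M M).inv :=
  rfl

lemma sigR_succ_succ (n k : ℕ) : sigR σ (n + 1) (k + 1) = tensorId (sigR σ n k) := by
  cases n <;> rfl

lemma sigR_eq_id {n k : ℕ} (h : n ≤ k + 1) : sigR σ n k = 𝟙 _ := by
  induction n generalizing k with
  | zero => rfl
  | succ n ih =>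
    cases k with
    | zero =>
      obtain rfl : n = 0 := by omega
      rfl
    | succ k => rw [sigR_succ_succ, ih (by omega), tensorId_id]

lemma sigR_comp_self (hsq : σ ≫ σ = 𝟙 (M ⊗ M)) (n k : ℕ) :
    sigR σ n k ≫ sigR σ n k = 𝟙 _ := by
  induction n generalizing k with
  | zero => exact Category.id_comp _
  | succ n ih =>
    cases k with
    | zero =>
      cases n with
      | zero => exact Category.id_comp _
      | succ n =>
        rw [sigR_zero]
        dsimp only [Tpow]
        simp [← whiskerLeft_comp_assoc, hsq]
    | succ k =>
      rw [sigR_succ_succ, ← tensorId_comp, ih, tensorId_id]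

lemma sigR_comm {n k k' : ℕ} (h : k' + 2 ≤ k) :
    sigR σ n k ≫ sigR σ n k' = sigR σ n k' ≫ sigR σ n k := by
  induction n generalizing k k' with
  | zero => rfl
  | succ n ih =>
    obtain ⟨k, rfl⟩ : ∃ m, k = m + 1 := ⟨k - 1, by omega⟩
    cases k' with
    | succ k' =>
      rw [sigR_succ_succ, sigR_succ_succ, ← tensorId_comp, ← tensorId_comp, ih (by omega)]
    | zero =>
      cases n with
      | zero => rw [sigR_eq_id σ (by omega : 1 ≤ 0 + 1), Category.comp_id, Category.id_comp]
      | succ n =>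
        obtain ⟨k, rfl⟩ : ∃ m, k = m + 1 := ⟨k - 1, by omega⟩
        rw [sigR_succ_succ, sigR_succ_succ, sigR_zero]
        dsimp only [Tpow, tensorId]
        rw [associator_naturality_left_assoc, ← whisker_exchange_assoc,
          associator_inv_naturality_left, Category.assoc, Category.assoc]

lemma sigAt_comp_self (hsq : σ ≫ σ = 𝟙 (M ⊗ M)) (n i : ℕ) :
    sigAt σ n i ≫ sigAt σ n i = 𝟙 _ :=
  sigR_comp_self σ hsq n _

lemma sigAt_comm {n a b : ℕ} (hab : a + 2 ≤ b) (hb : b < n) :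
    sigAt σ n a ≫ sigAt σ n b = sigAt σ n b ≫ sigAt σ n a :=
  sigR_comm σ (by omega)

lemma sigAt_eq_tensorId {n i : ℕ} (h : i < n) : sigAt σ (n + 1) i = tensorId (sigAt σ n i) := by
  rw [sigAt, sigAt, show n + 1 - 1 - i = n - 1 - i + 1 by omega, sigR_succ_succ]

lemma asc_succ' (n b l : ℕ) : asc σ n b (l + 1) = asc σ n b l ≫ sigAt σ n (b + l) := by
  induction l generalizing b with
  | zero => simp [asc]
  | succ l ih => rw [asc, ih, asc, Category.assoc, Nat.add_right_comm, Nat.add_assoc]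

lemma asc_eq_tensorId {n b l : ℕ} (h : b + l ≤ n) :
    asc σ (n + 1) b l = tensorId (asc σ n b l) := by
  induction l generalizing b with
  | zero => exact (tensorId_id _).symm
  | succ l ih =>
    rw [asc, asc, sigAt_eq_tensorId σ (by omega), ih (by omega), tensorId_comp]

lemma asc_comm_sigAt {n b l k : ℕ} (h : b + l + 1 ≤ k) (hk : k < n) :
    asc σ n b l ≫ sigAt σ n k = sigAt σ n k ≫ asc σ n b l := by
  induction l generalizing b with
  | zero => simp [asc]
  | succ l ih =>
    rw [asc, Category.assoc, ih (by omega), ← Category.assoc, sigAt_comm σ (by omega) hk,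
      Category.assoc]

lemma blockT_zero_right (p n : ℕ) : blockT σ p 0 n = 𝟙 _ := by
  induction p with
  | zero => rfl
  | succ p ih => rw [blockT, asc, ih, Category.comp_id]

lemma blockT_eq_tensorId {n p q : ℕ} (h : p + q ≤ n) :
    blockT σ p q (n + 1) = tensorId (blockT σ p q n) := by
  induction p with
  | zero => exact (tensorId_id _).symm
  | succ p ih =>
    rw [blockT, blockT, asc_eq_tensorId σ (by omega), ih (by omega), tensorId_comp]

lemma blockT_comm_sigAt {n p q k : ℕ} (h : p + q + 1 ≤ k) (hk : k < n) :
    blockT σ p q n ≫ sigAt σ n k = sigAt σ n k ≫ blockT σ p q n := by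
  induction p with
  | zero => simp [blockT]
  | succ p ih =>
    rw [blockT, Category.assoc, ih (by omega), ← Category.assoc, asc_comm_sigAt σ (by omega) hk,
      Category.assoc]

def desc (n b : ℕ) : ℕ → (Tpow M n ⟶ Tpow M n)
  | 0 => 𝟙 _
  | l + 1 => sigAt σ n (b + l) ≫ desc n b l

lemma desc_eq_tensorId {n b l : ℕ} (h : b + l ≤ n) :
    desc σ (n + 1) b l = tensorId (desc σ n b l) := by
  induction l with
  | zero => exact (tensorId_id _).symm
  | succ l ih =>
    rw [desc, desc, sigAt_eq_tensorId σ (by omega), ih (by omega), tensorId_comp]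

lemma desc_comp_asc (hsq : σ ≫ σ = 𝟙 (M ⊗ M)) (n b l : ℕ) :
    desc σ n b l ≫ asc σ n b l = 𝟙 _ := by
  induction l with
  | zero => exact Category.id_comp _
  | succ l ih =>
    rw [desc, asc_succ', Category.assoc, ← Category.assoc (desc σ n b l), ih, Category.id_comp,
      sigAt_comp_self σ hsq]

lemma blockT_succ_right {p q n : ℕ} (h : n = p + q + 1) :
    blockT σ p (q + 1) n = blockT σ p q n ≫ desc σ n (q + 1) p := by
  induction p generalizing n with
  | zero => simp [blockT, desc]
  | succ p ih =>
    obtain ⟨m, rfl⟩ : ∃ m, n = m + 1 := ⟨p + q + 1, by omega⟩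
    have hm : m = p + q + 1 := by omega
    calc blockT σ (p + 1) (q + 1) (m + 1)
        = asc σ (m + 1) (p + 1) (q + 1) ≫ tensorId (blockT σ p q m ≫ desc σ m (q + 1) p) := by
          rw [blockT, blockT_eq_tensorId σ (by omega), ih hm]
      _ = asc σ (m + 1) (p + 1) q ≫ sigAt σ (m + 1) (p + q + 1) ≫ blockT σ p q (m + 1) ≫
            desc σ (m + 1) (q + 1) p := by
          rw [tensorId_comp, asc_succ', blockT_eq_tensorId σ (by omega),
            desc_eq_tensorId σ (by omega), Category.assoc, Nat.add_right_comm]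
      _ = blockT σ (p + 1) q (m + 1) ≫ desc σ (m + 1) (q + 1) (p + 1) := by
          rw [← Category.assoc (sigAt σ _ _), ← blockT_comm_sigAt σ le_rfl (by omega), blockT,
            desc, show q + 1 + p = p + q + 1 by omega]
          simp only [Category.assoc]

lemma blockT_succ_right_comp_asc (hsq : σ ≫ σ = 𝟙 (M ⊗ M)) {p q n : ℕ} (h : n = p + q + 1) :
    blockT σ p (q + 1) n ≫ asc σ n (q + 1) p = blockT σ p q n := by
  rw [blockT_succ_right σ h, Category.assoc, desc_comp_asc σ hsq, Category.comp_id]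

lemma blockT_succ_succ_comp_asc (hsq : σ ≫ σ = 𝟙 (M ⊗ M)) {p q n : ℕ} (h : n = p + q + 2) :
    blockT σ (p + 1) (q + 1) n ≫ asc σ n (q + 1) p =
      blockT σ (p + 1) q n ≫ sigAt σ n (p + q + 1) := by
  rw [← blockT_succ_right_comp_asc σ hsq (p := p + 1) (q := q) (by omega), asc_succ',
    Category.assoc, Category.assoc, show q + 1 + p = p + q + 1 by omega, sigAt_comp_self σ hsq,
    Category.comp_id]

lemma tensorId_tpowCast {a b : ℕ} (h : a = b) :
    tensorId (tpowCast M h) = tpowCast M (congrArg (· + 1) h) := by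
  subst h; exact tensorId_id a

lemma sigAt_eq_sigR_zero {n i : ℕ} (h : i = n + 1) :
    sigAt σ (n + 1 + 1) i = sigR σ (n + 1 + 1) 0 := by
  subst h; rw [sigAt, show n + 1 + 1 - 1 - (n + 1) = 0 by omega]

lemma sigR_zero_comp_tensorHom {n : ℕ} {X Y Z : ModuleCat.{u} K} (μ : M ⊗ M ⟶ Z)
    (hμ : σ ≫ μ = μ) (f : Tpow M n ⟶ X) (g : X ⊗ Z ⟶ Y) :
    sigR σ (n + 1 + 1) 0 ≫ (α_ (Tpow M n) M M).hom ≫ (f ⊗ₘ μ) ≫ g =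
      (α_ (Tpow M n) M M).hom ≫ (f ⊗ₘ μ) ≫ g := by
  rw [sigR_zero]
  dsimp only [Tpow]
  simp only [Category.assoc, Iso.inv_hom_id_assoc, whiskerLeft_comp_tensorHom_assoc, hμ]

section Terms

variable {X Y : ModuleCat.{u} K} (J : ∀ i j : ℕ, Tpow M (i + j) ⟶ X)

def TwistedCommAt (i j : ℕ) : Prop :=
  blockT σ i j (i + j) ≫ tpowCast M (Nat.add_comm i j) ≫ J j i = J i j

variable {σ J}

lemma TwistedCommAt.tensorHom_id {i j n : ℕ} (hJ : TwistedCommAt σ J i j) (h : n = i + j + 1)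
    (g : X ⊗ M ⟶ Y) :
    blockT σ i j n ≫ tpowCast M (h.trans (by omega) : n = j + i + 1) ≫ (J j i ⊗ₘ 𝟙 M) ≫ g =
      tpowCast M h ≫ (J i j ⊗ₘ 𝟙 M) ≫ g := by
  subst h
  have := congrArg (fun f => (f ⊗ₘ 𝟙 M) ≫ g) hJ
  simp only [MonoidalCategory.tensorHom_id, comp_whiskerRight, Category.assoc] at this
  rw [blockT_eq_tensorId σ le_rfl, ← tensorId_tpowCast (Nat.add_comm i j), tpowCast_self,
    Category.id_comp, MonoidalCategory.tensorHom_id, MonoidalCategory.tensorHom_id]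
  exact this

lemma TwistedCommAt.associator_tensorHom {i j n : ℕ} (hJ : TwistedCommAt σ J i j)
    (h : n = i + j + 1 + 1) {Z : ModuleCat.{u} K} (μ : M ⊗ M ⟶ Z) (g : X ⊗ Z ⟶ Y) :
    blockT σ i j n ≫ tpowCast M (h.trans (by omega) : n = j + i + 1 + 1) ≫
        (α_ (Tpow M (j + i)) M M).hom ≫ (J j i ⊗ₘ μ) ≫ g =
      tpowCast M h ≫ (α_ (Tpow M (i + j)) M M).hom ≫ (J i j ⊗ₘ μ) ≫ g := by
  subst h
  rw [blockT_eq_tensorId σ (by omega), blockT_eq_tensorId σ le_rfl,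
    ← tensorId_tpowCast (congrArg (· + 1) (Nat.add_comm i j)),
    ← tensorId_tpowCast (Nat.add_comm i j), tpowCast_self, Category.id_comp]
  dsimp only [Tpow, tensorId]
  rw [associator_naturality_left_assoc, associator_naturality_left_assoc,
    whiskerRight_comp_tensorHom_assoc, whiskerRight_comp_tensorHom_assoc, hJ]

variable (σ J) (c : X ⊗ M ⟶ Y)

/- The three summands of the recursion (1) for `⋈` on `V^{⊗(i+1)} ⊗ V^{⊗(j+1)}`, according to
whether the last letter of the right word, the last letter of the left word, or the product of the
two is split off. -/
def qsRightTerm (i j : ℕ) : Tpow M (i + 1 + (j + 1)) ⟶ Y := (J (i + 1) j ⊗ₘ 𝟙 M) ≫ c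

def qsLeftTerm (i j : ℕ) : Tpow M (i + 1 + (j + 1)) ⟶ Y :=
  asc σ (i + 1 + (j + 1)) (i + 1) (j + 1) ≫
    tpowCast M (Nat.add_right_comm i 1 (j + 1)) ≫ (J i (j + 1) ⊗ₘ 𝟙 M) ≫ c

def qsMergeTerm (μ : M ⊗ M ⟶ M) (i j : ℕ) : Tpow M (i + 1 + (j + 1)) ⟶ Y :=
  asc σ (i + 1 + (j + 1)) (i + 1) j ≫
    tpowCast M (show i + 1 + (j + 1) = i + j + 1 + 1 from Nat.add_right_comm i 1 (j + 1)) ≫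
    (α_ (Tpow M (i + j)) M M).hom ≫ (J i j ⊗ₘ μ) ≫ c

variable {σ J}

lemma TwistedCommAt.blockT_comp_qsRightTerm {i j : ℕ} (hJ : TwistedCommAt σ J i (j + 1)) :
    blockT σ (i + 1) (j + 1) (i + 1 + (j + 1)) ≫ tpowCast M (Nat.add_comm (i + 1) (j + 1)) ≫
      qsRightTerm J c j i = qsLeftTerm σ J c i j := by
  rw [blockT, Category.assoc, qsRightTerm, qsLeftTerm]
  exact congrArg (asc σ _ (i + 1) (j + 1) ≫ ·) (hJ.tensorHom_id (by omega) c)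

lemma TwistedCommAt.blockT_comp_qsLeftTerm (hsq : σ ≫ σ = 𝟙 (M ⊗ M)) {i j : ℕ}
    (hJ : TwistedCommAt σ J (i + 1) j) :
    blockT σ (i + 1) (j + 1) (i + 1 + (j + 1)) ≫ tpowCast M (Nat.add_comm (i + 1) (j + 1)) ≫
      qsLeftTerm σ J c j i = qsRightTerm J c i j := by
  rw [qsLeftTerm, ← comp_tpowCast_assoc _ (fun n => asc σ n (j + 1) (i + 1)), ← Category.assoc,
    blockT_succ_right_comp_asc σ hsq (by omega), tpowCast_comp_tpowCast_assoc]
  exact (hJ.tensorHom_id (by omega) c).trans (Category.id_comp _)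

lemma TwistedCommAt.blockT_comp_qsMergeTerm (hsq : σ ≫ σ = 𝟙 (M ⊗ M)) (μ : M ⊗ M ⟶ M)
    (hμ : σ ≫ μ = μ) {i j : ℕ} (hJ : TwistedCommAt σ J i j) :
    blockT σ (i + 1) (j + 1) (i + 1 + (j + 1)) ≫ tpowCast M (Nat.add_comm (i + 1) (j + 1)) ≫
      qsMergeTerm σ J c μ j i = qsMergeTerm σ J c μ i j := by
  rw [qsMergeTerm, ← comp_tpowCast_assoc _ (fun n => asc σ n (j + 1) i), ← Category.assoc,
    blockT_succ_succ_comp_asc σ hsq (by omega), Category.assoc, tpowCast_comp_tpowCast_assoc,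
    comp_tpowCast_assoc _ (fun n => sigAt σ n (i + j + 1)), sigAt_eq_sigR_zero σ (by omega),
    sigR_zero_comp_tensorHom σ μ hμ, blockT, Category.assoc, qsMergeTerm]
  exact congrArg (asc σ _ (i + 1) j ≫ ·) (hJ.associator_tensorHom (by omega) μ c)

end Terms

end QuasiShuffle

open QuasiShuffle

theorem stmt19 {M : ModuleCat.{u} K} (σ : M ⊗ M ⟶ M ⊗ M) (mm : M ⊗ M ⟶ M)
    -- twisted commutativity and involutivity:
    (hcomm : σ ≫ mm = mm) (hsq : σ ≫ σ = 𝟙 (M ⊗ M))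
    -- `J i j` is the component `⋈_{σ(i,j)}` of the quantum quasi-shuffle product,
    -- characterized by the inductive formula (1):
    (J : ∀ i j : ℕ, (Tpow M (i+j) ⟶ TTc M))
    (hJr : ∀ i : ℕ, J i 0 = iotaT M i)
    (hJl : ∀ j : ℕ, J 0 j
      = eqToHom (show Tpow M (0+j) = Tpow M j by rw [Nat.zero_add]) ≫ iotaT M j)
    (hJrec : ∀ i j : ℕ,
      J (i+1) (j+1) =
        (((J (i+1) j ⊗ₘ 𝟙 M) ≫ concatR M : Tpow M ((i+1)+(j+1)) ⟶ TTc M)) +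
        (asc σ ((i+1)+(j+1)) (i+1) (j+1) ≫
          eqToHom (show Tpow M ((i+1)+(j+1)) = Tpow M (i+(j+1)) ⊗ M by
            rw [show (i+1)+(j+1) = (i+(j+1))+1 by omega]; rfl) ≫
          (J i (j+1) ⊗ₘ 𝟙 M) ≫ concatR M) +
        (asc σ ((i+1)+(j+1)) (i+1) j ≫
          eqToHom (show Tpow M ((i+1)+(j+1)) = (Tpow M (i+j) ⊗ M) ⊗ M by
            rw [show (i+1)+(j+1) = ((i+j)+1)+1 by omega]; rfl) ≫
          (α_ (Tpow M (i+j)) M M).hom ≫ (J i j ⊗ₘ mm) ≫ concatR M)) :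
    -- the quantum quasi-shuffle product is twisted commutative:
    ∀ i j : ℕ,
      blockT σ i j (i+j) ≫
        eqToHom (show Tpow M (i+j) = Tpow M (j+i) by rw [Nat.add_comm]) ≫ J j i
      = J i j := by
  have hJl' : ∀ j, J 0 j = tpowCast M (Nat.zero_add j) ≫ iotaT M j := hJl
  have hJrec' : ∀ i j, J (i + 1) (j + 1) = qsRightTerm J (concatR M) i j +
      qsLeftTerm σ J (concatR M) i j + qsMergeTerm σ J (concatR M) mm i j := hJrec
  suffices ∀ i j, TwistedCommAt σ J i j from this
  intro i j
  induction i generalizing j with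
  | zero =>
    rw [TwistedCommAt, hJr, hJl', blockT, Category.id_comp, tpowCast_comp_iotaT]
    exact tpowCast_comp_iotaT _
  | succ i ihi =>
    induction j with
    | zero =>
      rw [TwistedCommAt, hJr, hJl', blockT_zero_right, Category.id_comp,
        tpowCast_comp_tpowCast_assoc, tpowCast_comp_iotaT]
    | succ j ihj =>
      rw [TwistedCommAt, hJrec' j i, hJrec' i j]
      simp only [Preadditive.comp_add]
      rw [(ihi (j + 1)).blockT_comp_qsRightTerm, ihj.blockT_comp_qsLeftTerm _ hsq,
        (ihi j).blockT_comp_qsMergeTerm _ hsq mm hcomm]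
      abel
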